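/- Let P be a finite poset, k a field, and Q a full subposet of P with inclusion ι : Q ↪ P. Let M be a persistence module over Q with End(M) ≅ k (a brick). Then: (1) for every proper subobject Y of Lan(M), the restriction Res(Y) is not isomorphic to M; (2) for every proper quotient Z of Ran(M), the restriction Res(Z) is not isomorphic to M. -/

import Mathlib

/-!
An isomorphism `φ : Res Y ≅ M` with `m : Y ⟶ Lan M` mono gives by adjunction a morphism
`u : Lan M ⟶ Y`, and since `Lan` is full, `u ≫ m = Lan f` for an endomorphism `f` of `M`.
Restricting along the unit shows `f ≫ η = φ⁻¹ ≫ Res m`, which is mono because `Res` is a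
right adjoint; so `f` is a mono, hence nonzero, endomorphism of a brick, hence invertible.
Then `u ≫ m` is an isomorphism, so `m` is epi as well as mono. Quotients of `Ran M` are
handled dually.
-/

open CategoryTheory CategoryTheory.Limits

attribute [local instance] CategoryTheory.Limits.HasFiniteBiproducts.of_hasFiniteProducts

section Posets

variable {P : Type} [PartialOrder P]

/-- Zigzag connectivity of two elements of a subset `S` of a poset: they are linked by a
zigzag of comparable pairs inside `S`. -/
def ZigzagConnIn (S : Set P) (a b : S) : Prop :=
  Relation.ReflTransGen (fun u v : S => (u : P) ≤ v ∨ (v : P) ≤ u) a b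

/-- A subset of a poset is convex if `x ≤ z ≤ y` with `x, y` in the subset implies `z` is. -/
def IsConvex (S : Set P) : Prop :=
  ∀ ⦃x y z : P⦄, x ∈ S → y ∈ S → x ≤ z → z ≤ y → z ∈ S

/-- An interval of a poset: a nonempty, convex, zigzag-connected subset. -/
def IsIntervalSet (S : Set P) : Prop :=
  S.Nonempty ∧ IsConvex S ∧ ∀ a b : S, ZigzagConnIn S a b

end Posets

section IntervalModules

variable (k : Type) [Field k] {P : Type} [PartialOrder P]

open Classical in
/-- The linear map between the fibers of the interval module. -/
noncomputable def intervalModuleAux (S : Set P) (p q : P) :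
    ↥(if p ∈ S then (⊤ : Submodule k k) else ⊥) →ₗ[k]
      ↥(if q ∈ S then (⊤ : Submodule k k) else ⊥) where
  toFun x := ⟨(if p ∈ S ∧ q ∈ S then (1 : k) else 0) * x.1, by
    by_cases hq : q ∈ S
    · rw [if_pos hq]; exact Submodule.mem_top
    · rw [if_neg hq, Submodule.mem_bot]; simp [hq]⟩
  map_add' x y := by ext; simp [mul_add]
  map_smul' c x := by ext; simp

open Classical in
/-- The interval module `k_S` associated to a convex subset `S` of a poset `P`:
it is `k` at points of `S`, `0` elsewhere, with identity structure maps inside `S`. -/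
noncomputable def intervalModule (S : Set P) (hS : IsConvex S) : P ⥤ ModuleCat.{0} k where
  obj p := ModuleCat.of k ↥(if p ∈ S then (⊤ : Submodule k k) else ⊥)
  map {p q} _ := ModuleCat.ofHom (intervalModuleAux k S p q)
  map_id p := by
    apply ModuleCat.hom_ext
    apply LinearMap.ext
    rintro ⟨x, hx⟩
    apply Subtype.ext
    show (if p ∈ S ∧ p ∈ S then (1 : k) else 0) * x = x
    by_cases hp : p ∈ S
    · simp [hp]
    · rw [if_neg hp] at hx
      simp [hp, (Submodule.mem_bot k).mp hx]
  map_comp {p q r} f g := by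
    apply ModuleCat.hom_ext
    apply LinearMap.ext
    rintro ⟨x, hx⟩
    apply Subtype.ext
    show (if p ∈ S ∧ r ∈ S then (1 : k) else 0) * x
      = (if q ∈ S ∧ r ∈ S then (1 : k) else 0) * ((if p ∈ S ∧ q ∈ S then (1 : k) else 0) * x)
    by_cases hp : p ∈ S
    · by_cases hr : r ∈ S
      · have hq : q ∈ S := hS hp hr (leOfHom f) (leOfHom g)
        simp [hp, hq, hr]
      · simp [hr]
    · rw [if_neg hp] at hx
      simp [(Submodule.mem_bot k).mp hx]

/-- A persistence module is an interval module if it is isomorphic to `k_S` for some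
interval `S`. -/
def IsIntervalModule (M : P ⥤ ModuleCat.{0} k) : Prop :=
  ∃ (S : Set P) (hS : IsIntervalSet S), Nonempty (M ≅ intervalModule k S hS.2.1)

/-- A persistence module is interval-decomposable if it is isomorphic to a finite direct sum
of interval modules. -/
def IsIntervalDecomposable (M : P ⥤ ModuleCat.{0} k) : Prop :=
  ∃ (n : ℕ) (J : Fin n → (P ⥤ ModuleCat.{0} k)),
    (∀ i, IsIntervalModule k (J i)) ∧ Nonempty (M ≅ ⨁ J)

/-- The support of a persistence module. -/
def moduleSupport (M : P ⥤ ModuleCat.{0} k) : Set P := {p : P | ¬ IsZero (M.obj p)}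

/-- A persistence module valued in finite-dimensional vector spaces. -/
def PointwiseFinite (M : P ⥤ ModuleCat.{0} k) : Prop :=
  ∀ p : P, FiniteDimensional k (M.obj p)

end IntervalModules

section Approximations

variable {C : Type*} [Category C]

/-- `f : X ⟶ M` is a right `𝒳`-approximation of `M` if `X ∈ 𝒳` and every morphism
from an object of `𝒳` to `M` factors through `f`. -/
def IsRightApproximation (𝒳 : C → Prop) {X M : C} (f : X ⟶ M) : Prop :=
  𝒳 X ∧ ∀ ⦃Y : C⦄ (g : Y ⟶ M), 𝒳 Y → ∃ h : Y ⟶ X, h ≫ f = g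

/-- `f : X ⟶ M` is right minimal if every endomorphism `g` of `X` with `f ∘ g = f`
is an isomorphism. -/
def IsRightMinimal {X M : C} (f : X ⟶ M) : Prop :=
  ∀ g : X ⟶ X, g ≫ f = f → IsIso g

end Approximations

/-- An interval cover: a right minimal approximation by interval-decomposable modules. -/
def IsIntervalCover (k : Type) [Field k] {P : Type} [PartialOrder P]
    {X M : P ⥤ ModuleCat.{0} k} (f : X ⟶ M) : Prop :=
  IsRightApproximation (IsIntervalDecomposable k) f ∧ IsRightMinimal f

section Resolutions

variable {C : Type*} [Category C] [Limits.HasZeroMorphisms C]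

/-- `M` admits a resolution `0 ⟶ J_n ⟶ ⋯ ⟶ J_1 ⟶ J_0 ⟶ M ⟶ 0` of length `n` by objects
of `𝒳`: an exact sequence in which every `J_i` lies in `𝒳`.  (The data is encoded by an
`ℕ`-indexed complex which vanishes in degrees `> n` and is exact everywhere.) -/
def HasResolutionOfLength (𝒳 : C → Prop) (n : ℕ) (M : C) : Prop :=
  ∃ (J : ℕ → C) (d : ∀ i, J (i + 1) ⟶ J i) (f : J 0 ⟶ M) (w0 : d 0 ≫ f = 0)
    (w : ∀ i, d (i + 1) ≫ d i = 0),
    (∀ i, i ≤ n → 𝒳 (J i)) ∧ (∀ i, n < i → IsZero (J i)) ∧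
    Epi f ∧ (ShortComplex.mk (d 0) f w0).Exact ∧
    ∀ i, (ShortComplex.mk (d (i + 1)) (d i) (w i)).Exact

end Resolutions

section KanTheta

variable (k : Type) [Field k] {P : Type} [PartialOrder P] (Q : Set P)

/-- The restriction functor along the inclusion `ι : Q ↪ P` of a full subposet
(precomposition with `ι`). -/
noncomputable def resFunctor : (P ⥤ ModuleCat.{0} k) ⥤ (↥Q ⥤ ModuleCat.{0} k) :=
  (CategoryTheory.Functor.whiskeringLeft _ _ _).obj (Subtype.mono_coe (· ∈ Q)).functor

variable (L R : (↥Q ⥤ ModuleCat.{0} k) ⥤ (P ⥤ ModuleCat.{0} k))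
variable (adjL : L ⊣ resFunctor k Q) (adjR : resFunctor k Q ⊣ R)

/-- The canonical morphism `θ_M : Lan(M) ⟶ Ran(M)` corresponding to the identity of `M`
under the adjunction isomorphisms
`Hom(Lan M, Ran M) ≅ Hom(M, Res (Ran M)) ≅ Hom(M, M)`. -/
noncomputable def thetaHom [IsIso adjR.counit] (M : ↥Q ⥤ ModuleCat.{0} k) :
    L.obj M ⟶ R.obj M :=
  (adjL.homEquiv M (R.obj M)).symm ((asIso adjR.counit).inv.app M)

lemma thetaHom_naturality [IsIso adjR.counit] {M N : ↥Q ⥤ ModuleCat.{0} k} (f : M ⟶ N) :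
    L.map f ≫ thetaHom k Q L R adjL adjR N = thetaHom k Q L R adjL adjR M ≫ R.map f := by
  dsimp [thetaHom]
  rw [← Adjunction.homEquiv_naturality_left_symm, ← Adjunction.homEquiv_naturality_right_symm]
  congr 1
  simpa using ((asIso adjR.counit).inv.naturality f)

/-- The functor `Θ`, sending `M` to the image of `θ_M : Lan(M) ⟶ Ran(M)`. -/
noncomputable def Theta [IsIso adjR.counit] :
    (↥Q ⥤ ModuleCat.{0} k) ⥤ (P ⥤ ModuleCat.{0} k) where
  obj M := image (thetaHom k Q L R adjL adjR M)
  map {M N} f := image.map (Arrow.homMk' _ _ (thetaHom_naturality k Q L R adjL adjR f))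
  map_id M := by
    have h : Arrow.homMk' _ _ (thetaHom_naturality k Q L R adjL adjR (𝟙 M)) =
        𝟙 (Arrow.mk (thetaHom k Q L R adjL adjR M)) :=
      Arrow.hom_ext _ _ (by simp) (by simp)
    show image.map (Arrow.homMk' _ _ (thetaHom_naturality k Q L R adjL adjR (𝟙 M))) =
      𝟙 (image (thetaHom k Q L R adjL adjR M))
    rw [h, image.map_id]
    rfl
  map_comp {M N O} f g := by
    have h : Arrow.homMk' _ _ (thetaHom_naturality k Q L R adjL adjR (f ≫ g)) =
        Arrow.homMk' _ _ (thetaHom_naturality k Q L R adjL adjR f) ≫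
          Arrow.homMk' _ _ (thetaHom_naturality k Q L R adjL adjR g) :=
      Arrow.hom_ext _ _ (by simp) (by simp)
    show image.map (Arrow.homMk' _ _ (thetaHom_naturality k Q L R adjL adjR (f ≫ g))) =
      image.map (Arrow.homMk' _ _ (thetaHom_naturality k Q L R adjL adjR f)) ≫
        image.map (Arrow.homMk' _ _ (thetaHom_naturality k Q L R adjL adjR g))
    rw [h, image.map_comp]

end KanTheta

section Brick

variable {C : Type*} [Category C] [Preadditive C] {K : Type*} [DivisionRing K] {X : C}

lemma isIso_of_ne_zero_of_endRingEquiv (e : End X ≃+* K) {f : X ⟶ X} (hf : f ≠ 0) :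
    IsIso f :=
  (isUnit_iff_isIso (show End X from f)).mp <| (isUnit_map_iff e (show End X from f)).mp <|
    isUnit_iff_ne_zero.mpr ((map_ne_zero_iff e e.injective).mpr hf)

lemma id_ne_zero_of_endRingEquiv (e : End X ≃+* K) : (𝟙 X : X ⟶ X) ≠ 0 := fun h => by
  have : e 1 = 0 := by rw [End.one_def, h, map_zero]
  exact one_ne_zero ((map_one e).symm.trans this)

lemma isIso_of_mono_of_endRingEquiv (e : End X ≃+* K) (f : X ⟶ X) [Mono f] : IsIso f :=
  isIso_of_ne_zero_of_endRingEquiv e fun hf =>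
    id_ne_zero_of_endRingEquiv e ((cancel_mono f).mp (by simp [hf]))

lemma isIso_of_epi_of_endRingEquiv (e : End X ≃+* K) (f : X ⟶ X) [Epi f] : IsIso f :=
  isIso_of_ne_zero_of_endRingEquiv e fun hf =>
    id_ne_zero_of_endRingEquiv e ((cancel_epi f).mp (by simp [hf]))

end Brick

namespace CategoryTheory.Adjunction

variable {C D : Type*} [Category C] [Category D] [Balanced C] {G : C ⥤ D} {M : D}

theorem isIso_of_mono_of_obj_iso {L : D ⥤ C} (adj : L ⊣ G) [L.Full]
    (hM : ∀ f : M ⟶ M, Mono f → IsIso f) {Y : C} (m : Y ⟶ L.obj M) [Mono m]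
    (φ : G.obj Y ≅ M) : IsIso m := by
  have := G.preservesMonomorphisms_of_adjunction adj
  let u : L.obj M ⟶ Y := (adj.homEquiv M Y).symm φ.inv
  obtain ⟨f, hf⟩ := L.map_surjective (u ≫ m)
  have hunit : f ≫ adj.unit.app M = φ.inv ≫ G.map m := by
    rw [← adj.unit_naturality f, hf, G.map_comp, ← Category.assoc,
      ← Adjunction.homEquiv_unit, Equiv.apply_symm_apply]
  have hf_iso : IsIso f := hM f <| by
    have : Mono (f ≫ adj.unit.app M) := by rw [hunit]; infer_instance
    exact mono_of_mono f (adj.unit.app M)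
  have : IsIso (u ≫ m) := by rw [← hf]; infer_instance
  have : Epi m := epi_of_epi u m
  exact isIso_of_mono_of_epi m

theorem isIso_of_epi_of_obj_iso {R : D ⥤ C} (adj : G ⊣ R) [R.Full]
    (hM : ∀ f : M ⟶ M, Epi f → IsIso f) {Z : C} (e : R.obj M ⟶ Z) [Epi e]
    (φ : G.obj Z ≅ M) : IsIso e := by
  have := G.preservesEpimorphisms_of_adjunction adj
  let v : Z ⟶ R.obj M := adj.homEquiv Z M φ.hom
  obtain ⟨f, hf⟩ := R.map_surjective (e ≫ v)
  have hcounit : adj.counit.app M ≫ f = G.map e ≫ φ.hom := by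
    rw [← Functor.id_map f, ← adj.counit.naturality f, Functor.comp_map, hf, G.map_comp,
      Category.assoc]
    simp [v, Adjunction.homEquiv_unit]
  have hf_iso : IsIso f := hM f <| by
    have : Epi (adj.counit.app M ≫ f) := by rw [hcounit]; infer_instance
    exact epi_of_epi (adj.counit.app M) f
  have : IsIso (e ≫ v) := by rw [← hf]; infer_instance
  have : Mono e := mono_of_mono e v
  exact isIso_of_mono_of_epi e

end CategoryTheory.Adjunction

theorem lan_ran_brick_proper_subquotient_general
    (k : Type) [Field k] (P : Type) [PartialOrder P] (Q : Set P)
    (L R : (↥Q ⥤ ModuleCat.{0} k) ⥤ (P ⥤ ModuleCat.{0} k))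
    (adjL : L ⊣ resFunctor k Q) (adjR : resFunctor k Q ⊣ R)
    [IsIso adjL.unit] [IsIso adjR.counit]
    (M : ↥Q ⥤ ModuleCat.{0} k)
    (hbrick : Nonempty (CategoryTheory.End M ≃+* k)) :
    (∀ (Y : P ⥤ ModuleCat.{0} k) (m : Y ⟶ L.obj M), Mono m → ¬ IsIso m →
      ¬ Nonempty ((resFunctor k Q).obj Y ≅ M)) ∧
    (∀ (Z : P ⥤ ModuleCat.{0} k) (e : R.obj M ⟶ Z), Epi e → ¬ IsIso e →
      ¬ Nonempty ((resFunctor k Q).obj Z ≅ M)) := by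
  obtain ⟨eb⟩ := hbrick
  have := adjL.fullyFaithfulLOfIsIsoUnit.full
  have := adjR.fullyFaithfulROfIsIsoCounit.full
  refine ⟨fun Y m _ hm ⟨φ⟩ => hm ?_, fun Z e _ he ⟨φ⟩ => he ?_⟩
  · exact adjL.isIso_of_mono_of_obj_iso (fun f _ => isIso_of_mono_of_endRingEquiv eb f) m φ
  · exact adjR.isIso_of_epi_of_obj_iso (fun f _ => isIso_of_epi_of_endRingEquiv eb f) e φ

/-- Let `M` be a brick (`End(M) ≅ k`) over the full subposet `Q` of `P`.
Then (1) no proper subobject of `Lan(M)` restricts to a module isomorphic to `M`, and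
(2) no proper quotient of `Ran(M)` restricts to a module isomorphic to `M`. -/
theorem lan_ran_brick_proper_subquotient
    (k : Type) [Field k] (P : Type) [PartialOrder P] [Finite P] (Q : Set P)
    (L R : (↥Q ⥤ ModuleCat.{0} k) ⥤ (P ⥤ ModuleCat.{0} k))
    (adjL : L ⊣ resFunctor k Q) (adjR : resFunctor k Q ⊣ R)
    [IsIso adjL.unit] [IsIso adjR.counit]
    (M : ↥Q ⥤ ModuleCat.{0} k) (hfd : PointwiseFinite k M)
    (hbrick : Nonempty (CategoryTheory.End M ≃+* k)) :
    (∀ (Y : P ⥤ ModuleCat.{0} k) (m : Y ⟶ L.obj M), Mono m → ¬ IsIso m →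
      ¬ Nonempty ((resFunctor k Q).obj Y ≅ M)) ∧
    (∀ (Z : P ⥤ ModuleCat.{0} k) (e : R.obj M ⟶ Z), Epi e → ¬ IsIso e →
      ¬ Nonempty ((resFunctor k Q).obj Z ≅ M)) :=
  lan_ran_brick_proper_subquotient_general k P Q L R adjL adjR M hbrick
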